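/- arXiv:1309.0339 — 5 statements merged into one kernel-verified Lean document; each statement's English description precedes it below -/
import Mathlib

section
/- Let N be a positive integer and for each i ∈ Fin N let p_i be a multivariate polynomial over ℝ in variables indexed by Fin N, all of whose coefficients are nonnegative and whose coefficients sum to at most 1. Define T : (Fin N → ℝ) → (Fin N → ℝ) by (T x) i = eval x (p_i), and the sequence x_0 = 0, x_{k+1} = T x_k. Then (x_k) is pointwise monotone nondecreasing, bounded above pointwise by 1, converges pointwise to a limit x_∞ satisfying T x_∞ = x_∞, and x_∞ is the least fixed point among nonnegative vectors: for every y : Fin N → ℝ with 0 ≤ y pointwise and T y = y, one has x_∞ ≤ y pointwise. -/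
/-!
Every `p i` has nonnegative coefficients, so `T` is monotone on the nonnegative orthant and
`0 ≤ T 0`. Hence the Kleene iterates `T^[k] 0` increase and stay below every nonnegative
prefixed point `y` (`T y ≤ y`), in particular below `1`, since `T 1 ≤ 1` is the bound on the
coefficient sums. Their supremum is the limit, and it is a fixed point because `T` is continuous.
-/

open MvPolynomial Filter Set

namespace MvPolynomial

variable {σ R : Type*} [CommSemiring R]

theorem eval_one_eq_sum_coeff (q : MvPolynomial σ R) :
    eval 1 q = ∑ m ∈ q.support, q.coeff m := by
  simp [eval_eq]

variable [PartialOrder R] [IsOrderedRing R]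

theorem monotoneOn_eval_of_coeff_nonneg {q : MvPolynomial σ R} (hq : ∀ m, 0 ≤ q.coeff m) :
    MonotoneOn (fun v : σ → R => eval v q) (Ici 0) := by
  intro v hv w _ hvw
  simp only [eval_eq]
  gcongr with m _ i _
  · exact hq m
  · exact fun i _ => pow_nonneg (hv i) _
  · exact hv i
  · exact hvw i

end MvPolynomial

namespace MonotoneOn

variable {α : Type*} [Preorder α] {f : α → α} {a : α}

theorem le_iterate_of_le_map (hf : MonotoneOn f (Ici a)) (ha : a ≤ f a) (n : ℕ) :
    a ≤ f^[n] a := by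
  induction n with
  | zero => exact le_rfl
  | succ n ih =>
    rw [Function.iterate_succ_apply']
    exact ha.trans (hf le_rfl ih ih)

theorem monotone_iterate_of_le_map (hf : MonotoneOn f (Ici a)) (ha : a ≤ f a) :
    Monotone fun n => f^[n] a := by
  refine monotone_nat_of_le_succ fun n => ?_
  induction n with
  | zero => exact ha
  | succ n ih =>
    rw [Function.iterate_succ_apply', Function.iterate_succ_apply' f (n + 1)]
    exact hf (hf.le_iterate_of_le_map ha n) (hf.le_iterate_of_le_map ha (n + 1)) ih

theorem iterate_le_of_map_le (hf : MonotoneOn f (Ici a)) (ha : a ≤ f a) {y : α}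
    (hay : a ≤ y) (hy : f y ≤ y) (n : ℕ) : f^[n] a ≤ y := by
  induction n with
  | zero => exact hay
  | succ n ih =>
    rw [Function.iterate_succ_apply']
    exact (hf (hf.le_iterate_of_le_map ha n) hay ih).trans hy

end MonotoneOn

theorem kleene_iteration_least_fixed_point_general (N : ℕ)
    (p : Fin N → MvPolynomial (Fin N) ℝ)
    (hcoeff : ∀ i m, 0 ≤ (p i).coeff m)
    (hsum : ∀ i, ∑ m ∈ (p i).support, (p i).coeff m ≤ 1)
    (T : (Fin N → ℝ) → (Fin N → ℝ))
    (hT : ∀ x i, T x i = eval x (p i))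
    (x : ℕ → Fin N → ℝ) (hx0 : x 0 = 0) (hxs : ∀ k, x (k + 1) = T (x k)) :
    (∀ i, Monotone fun k => x k i) ∧
    (∀ k i, x k i ≤ 1) ∧
    ∃ xinf : Fin N → ℝ,
      (∀ i, Tendsto (fun k => x k i) atTop (nhds (xinf i))) ∧
      T xinf = xinf ∧
      ∀ y : Fin N → ℝ, (∀ i, 0 ≤ y i) → T y = y → ∀ i, xinf i ≤ y i := by
  obtain rfl : x = fun k => T^[k] 0 := funext fun k => by
    induction k with
    | zero => exact hx0
    | succ k ih => rw [hxs, ih, Function.iterate_succ_apply']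
  have hmonoOn : MonotoneOn T (Ici 0) := fun v hv w hw hvw i => by
    simpa only [hT] using monotoneOn_eval_of_coeff_nonneg (hcoeff i) hv hw hvw
  have hT0 : 0 ≤ T 0 := fun i => by
    simpa only [hT, eval_zero, constantCoeff_eq, Pi.zero_apply] using hcoeff i 0
  have hT1 : T 1 ≤ 1 := fun i => by
    simpa only [hT, eval_one_eq_sum_coeff, Pi.one_apply] using hsum i
  have hcont : Continuous T := continuous_pi fun i => by
    simpa only [hT] using (p i).continuous_eval
  have hle : ∀ y, 0 ≤ y → T y ≤ y → ∀ k, T^[k] 0 ≤ y := fun y hy hTy =>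
    hmonoOn.iterate_le_of_map_le hT0 hy hTy
  have hmono : Monotone fun k => T^[k] 0 := hmonoOn.monotone_iterate_of_le_map hT0
  have hlim : Tendsto (fun k => T^[k] 0) atTop (nhds (⨆ k, T^[k] 0)) :=
    tendsto_atTop_ciSup hmono ⟨1, forall_mem_range.2 (hle 1 zero_le_one hT1)⟩
  refine ⟨fun i => (Function.monotone_eval i).comp hmono, fun k => hle 1 zero_le_one hT1 k,
    _, tendsto_pi_nhds.1 hlim, isFixedPt_of_tendsto_iterate hlim hcont.continuousAt, ?_⟩
  intro y hy hTy
  exact ciSup_le (hle y hy hTy.le)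

theorem kleene_iteration_least_fixed_point (N : ℕ) (hN : 0 < N)
    (p : Fin N → MvPolynomial (Fin N) ℝ)
    (hcoeff : ∀ i m, 0 ≤ (p i).coeff m)
    (hsum : ∀ i, ∑ m ∈ (p i).support, (p i).coeff m ≤ 1)
    (T : (Fin N → ℝ) → (Fin N → ℝ))
    (hT : ∀ x i, T x i = eval x (p i))
    (x : ℕ → Fin N → ℝ) (hx0 : x 0 = 0) (hxs : ∀ k, x (k + 1) = T (x k)) :
    (∀ i, Monotone fun k => x k i) ∧
    (∀ k i, x k i ≤ 1) ∧
    ∃ xinf : Fin N → ℝ,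
      (∀ i, Tendsto (fun k => x k i) atTop (nhds (xinf i))) ∧
      T xinf = xinf ∧
      ∀ y : Fin N → ℝ, (∀ i, 0 ≤ y i) → T y = y → ∀ i, xinf i ≤ y i :=
  kleene_iteration_least_fixed_point_general N p hcoeff hsum T hT x hx0 hxs
end

section
/- Let M be a K × K real matrix that is entrywise nonnegative, and let X, Y : Fin K → ℝ be entrywise nonnegative vectors satisfying X = M.mulVec X + Y. Then for each coordinate i, the real sequence k ↦ (((∑_{j < k} M^j)).mulVec Y) i is monotone nondecreasing and bounded above by X i, hence converges; consequently the sequence k ↦ ((M^k).mulVec X) i also converges. -/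
open Filter Finset
open scoped Matrix

/-!
Iterating `x = A x + y` gives `x = (∑_{j<k} Aʲ) y + Aᵏ x` for every `k`. For entrywise
nonnegative data both summands are nonnegative, so the partial sums increase and stay below `x`;
they converge as bounded monotone real sequences, and hence so does `Aᵏ x = x - (∑_{j<k} Aʲ) y`.
-/

namespace Matrix

variable {n R : Type*} [Fintype n] [Semiring R] {A : Matrix n n R} {x y : n → R}

theorem mulVec_nonneg_of_nonneg [PartialOrder R] [IsOrderedRing R] (hA : ∀ i j, 0 ≤ A i j)
    (hx : 0 ≤ x) : 0 ≤ A *ᵥ x :=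
  fun i => dotProduct_nonneg_of_nonneg (hA i) hx

variable [DecidableEq n]

theorem eq_geom_sum_mulVec_add_pow_mulVec (h : x = A *ᵥ x + y) (k : ℕ) :
    x = (∑ j ∈ range k, A ^ j) *ᵥ y + (A ^ k) *ᵥ x := by
  induction k with
  | zero => simp
  | succ k ih =>
    have hpow : (A ^ k) *ᵥ x = (A ^ (k + 1)) *ᵥ x + (A ^ k) *ᵥ y := by
      conv_lhs => rw [h]
      rw [mulVec_add, mulVec_mulVec, ← pow_succ]
    rw [sum_range_succ, add_mulVec, add_assoc, add_comm ((A ^ k) *ᵥ y), ← hpow]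
    exact ih

variable [PartialOrder R] [IsOrderedRing R]

theorem monotone_geom_sum_mulVec (hA : ∀ i j, 0 ≤ A i j) (hy : 0 ≤ y) :
    Monotone fun k => (∑ j ∈ range k, A ^ j) *ᵥ y := by
  refine monotone_nat_of_le_succ fun k => ?_
  rw [sum_range_succ, add_mulVec]
  exact le_add_of_nonneg_right (mulVec_nonneg_of_nonneg (pow_apply_nonneg hA k) hy)

theorem geom_sum_mulVec_le (hA : ∀ i j, 0 ≤ A i j) (hx : 0 ≤ x) (h : x = A *ᵥ x + y)
    (k : ℕ) : (∑ j ∈ range k, A ^ j) *ᵥ y ≤ x := by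
  conv_rhs => rw [eq_geom_sum_mulVec_add_pow_mulVec h k]
  exact le_add_of_nonneg_right (mulVec_nonneg_of_nonneg (pow_apply_nonneg hA k) hx)

end Matrix

theorem partial_sums_converge {K : ℕ} (M : Matrix (Fin K) (Fin K) ℝ)
    (hM : ∀ i j, 0 ≤ M i j) (X Y : Fin K → ℝ)
    (hX : ∀ i, 0 ≤ X i) (hY : ∀ i, 0 ≤ Y i)
    (h : X = M.mulVec X + Y) :
    ∀ i, Monotone (fun k => ((∑ j ∈ Finset.range k, M ^ j).mulVec Y) i) ∧
      (∀ k, ((∑ j ∈ Finset.range k, M ^ j).mulVec Y) i ≤ X i) ∧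
      (∃ l : ℝ, Tendsto (fun k => ((∑ j ∈ Finset.range k, M ^ j).mulVec Y) i)
        atTop (nhds l)) ∧
      (∃ l' : ℝ, Tendsto (fun k => ((M ^ k).mulVec X) i) atTop (nhds l')) := by
  intro i
  have hmono : Monotone fun k => ((∑ j ∈ range k, M ^ j) *ᵥ Y) i :=
    fun _ _ hkl => Matrix.monotone_geom_sum_mulVec hM hY hkl i
  have hbdd : ∀ k, ((∑ j ∈ range k, M ^ j) *ᵥ Y) i ≤ X i :=
    fun k => Matrix.geom_sum_mulVec_le hM hX h k i
  have hlim := tendsto_atTop_ciSup hmono ⟨X i, by rintro _ ⟨k, rfl⟩; exact hbdd k⟩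
  have hpow : (fun k => ((M ^ k) *ᵥ X) i) = fun k => X i - ((∑ j ∈ range k, M ^ j) *ᵥ Y) i := by
    funext k
    rw [eq_sub_iff_add_eq', ← Pi.add_apply, ← Matrix.eq_geom_sum_mulVec_add_pow_mulVec h k]
  exact ⟨hmono, hbdd, ⟨_, hlim⟩, ⟨_, hpow ▸ hlim.const_sub (X i)⟩⟩
end

section
/- Let M be a K × K real matrix that is entrywise nonnegative and let X : Fin K → ℝ be an entrywise strictly positive vector such that the sequence of vectors (M^k).mulVec X is bounded, i.e., there is a constant C with ((M^k).mulVec X) i ≤ C for all k and all i. Then every complex eigenvalue of the complexification of M has modulus at most 1. -/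
/-!
Suppose `M v = λ v` with `v ≠ 0`. As `X > 0`, some `c ≥ 0` has `|v| ≤ c X` entrywise, and as `M ^ k`
is entrywise nonnegative, `|λ| ^ k |v| = |M ^ k v| ≤ M ^ k |v| ≤ c M ^ k X ≤ c C`. At an index
where `v` does not vanish this bounds all powers of `|λ|`, so `|λ| ≤ 1`.
-/

lemma le_one_of_forall_pow_le {R : Type*} [Semiring R] [LinearOrder R] [IsStrictOrderedRing R]
    [Archimedean R] [ExistsAddOfLE R] {a B : R} (h : ∀ k : ℕ, a ^ k ≤ B) : a ≤ 1 := by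
  by_contra! ha
  obtain ⟨k, hk⟩ := pow_unbounded_of_one_lt B ha
  exact (h k).not_gt hk

lemma exists_nonneg_le_smul_of_pos {ι R : Type*} [Fintype ι] [Field R] [LinearOrder R]
    [IsStrictOrderedRing R] (f : ι → R) {X : ι → R} (hX : ∀ i, 0 < X i) :
    ∃ c : R, 0 ≤ c ∧ f ≤ c • X := by
  have hq : ∀ j, 0 ≤ |f j| / X j := fun j => div_nonneg (abs_nonneg _) (hX j).le
  refine ⟨∑ j, |f j| / X j, Finset.sum_nonneg fun j _ => hq j, fun i => ?_⟩
  calc f i ≤ |f i| / X i * X i := by rw [div_mul_cancel₀ _ (hX i).ne']; exact le_abs_self _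
    _ ≤ (∑ j, |f j| / X j) * X i :=
      mul_le_mul_of_nonneg_right (Finset.single_le_sum (fun j _ => hq j) (Finset.mem_univ i))
        (hX i).le

namespace Matrix

lemma pow_mulVec_eq_smul {S ι : Type*} [CommSemiring S] [Fintype ι] [DecidableEq ι]
    {A : Matrix ι ι S} {a : S} {v : ι → S} (hv : A *ᵥ v = a • v) (k : ℕ) :
    (A ^ k) *ᵥ v = a ^ k • v := by
  induction k with
  | zero => simp
  | succ k ih => rw [pow_succ', ← mulVec_mulVec, ih, mulVec_smul, hv, smul_smul, pow_succ]

lemma norm_map_ofReal_mulVec_le {m n : Type*} [Fintype n] {M : Matrix m n ℝ}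
    (hM : ∀ i j, 0 ≤ M i j) (v : n → ℂ) (i : m) :
    ‖(M.map Complex.ofReal *ᵥ v) i‖ ≤ (M *ᵥ fun j => ‖v j‖) i :=
  calc ‖∑ j, (M i j : ℂ) * v j‖ ≤ ∑ j, ‖(M i j : ℂ) * v j‖ := norm_sum_le _ _
    _ = ∑ j, M i j * ‖v j‖ := by
      simp only [norm_mul, Complex.norm_of_nonneg (hM i _)]

end Matrix

open Matrix in
theorem eigenvalues_le_one_of_bounded_iterates {K : ℕ}
    (M : Matrix (Fin K) (Fin K) ℝ) (hM : ∀ i j, 0 ≤ M i j)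
    (X : Fin K → ℝ) (hX : ∀ i, 0 < X i)
    (C : ℝ) (hC : ∀ k : ℕ, ∀ i, ((M ^ k).mulVec X) i ≤ C) :
    ∀ lam : ℂ,
      (∃ v : Fin K → ℂ, v ≠ 0 ∧ (M.map Complex.ofReal).mulVec v = lam • v) →
      ‖lam‖ ≤ 1 := by
  rintro lam ⟨v, hv, hev⟩
  obtain ⟨i, hi⟩ := Function.ne_iff.mp hv
  obtain ⟨c, hc0, hc⟩ := exists_nonneg_le_smul_of_pos (fun j => ‖v j‖) hX
  refine le_one_of_forall_pow_le (B := c * C / ‖v i‖) fun k => ?_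
  rw [le_div_iff₀ (norm_pos_iff.mpr hi)]
  have hMk := pow_apply_nonneg hM k
  calc ‖lam‖ ^ k * ‖v i‖ = ‖((M ^ k).map Complex.ofReal *ᵥ v) i‖ := by
        rw [show (M ^ k).map Complex.ofReal = M.map Complex.ofReal ^ k from
          Matrix.map_pow M Complex.ofRealHom k, pow_mulVec_eq_smul hev]
        simp
    _ ≤ (M ^ k *ᵥ fun j => ‖v j‖) i := norm_map_ofReal_mulVec_le hMk v i
    _ ≤ (M ^ k *ᵥ c • X) i := dotProduct_le_dotProduct_of_nonneg_left hc (hMk i)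
    _ = c * (M ^ k *ᵥ X) i := by rw [mulVec_smul]; rfl
    _ ≤ c * C := mul_le_mul_of_nonneg_left (hC k i) hc0
end

section
/- Let M be a K × K real matrix that is entrywise nonnegative and irreducible (for all indices i, j there exists k ≥ 1 with (M^k) i j > 0), such that every complex eigenvalue of the complexification of M has modulus at most 1 and 1 is an eigenvalue. Then for every entrywise nonnegative, nonzero vector Y : Fin K → ℝ, the sequence of vectors ((∑_{j < k} M^j)).mulVec Y is unbounded: for some coordinate i, the sequence k ↦ (((∑_{j < k} M^j)).mulVec Y) i tends to +∞. -/
open Filter Matrix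

/-!
Since `1` is an eigenvalue of `M`, it is also an eigenvalue of `Mᵀ`; if `u` is a left eigenvector,
the triangle inequality makes `w = |u|` a nonnegative, nonzero, left sub-invariant vector:
`w ≤ w M`, hence `w ≤ w M ^ m` for every `m`. Irreducibility provides `k` with
`c = w ⬝ (M ^ k Y) > 0`, and then `w ⬝ (M ^ m Y) = (w M ^ (m - k)) ⬝ (M ^ k Y) ≥ c` for `m ≥ k`.
So `w ⬝ (∑_{j < n} M ^ j) Y` grows at least linearly, and as the coordinates of
`(∑_{j < n} M ^ j) Y` are nondecreasing in `n`, one of them tends to infinity.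
-/

namespace Matrix

theorem exists_vecMul_eq_smul_of_mulVec_eq_smul {n K : Type*} [Fintype n] [DecidableEq n]
    [Field K] {A : Matrix n n K} {lam : K} (h : ∃ v ≠ 0, A *ᵥ v = lam • v) :
    ∃ u ≠ 0, u ᵥ* A = lam • u := by
  obtain ⟨v, hv0, hv⟩ := h
  have hdet : (A - lam • 1).det = 0 :=
    exists_mulVec_eq_zero_iff.mp
      ⟨v, hv0, by rw [sub_mulVec, smul_mulVec, one_mulVec, hv, sub_self]⟩
  obtain ⟨u, hu0, hu⟩ := exists_vecMul_eq_zero_iff.mpr hdet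
  exact ⟨u, hu0, by rwa [vecMul_sub, vecMul_smul, vecMul_one, sub_eq_zero] at hu⟩

section Nonneg

variable {m n R : Type*} [Semiring R] [PartialOrder R] [IsOrderedRing R]

theorem mulVec_nonneg [Fintype n] {A : Matrix m n R} (hA : ∀ i j, 0 ≤ A i j) {v : n → R}
    (hv : 0 ≤ v) : 0 ≤ A *ᵥ v :=
  fun i => dotProduct_nonneg_of_nonneg (hA i) hv

theorem vecMul_le_vecMul_of_nonneg [Fintype m] {A : Matrix m n R} (hA : ∀ i j, 0 ≤ A i j)
    {x y : m → R} (hxy : x ≤ y) : x ᵥ* A ≤ y ᵥ* A :=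
  fun j => dotProduct_le_dotProduct_of_nonneg_right hxy fun i => hA i j

variable [Fintype n] [DecidableEq n] {A : Matrix n n R}

theorem le_vecMul_pow_of_le_vecMul (hA : ∀ i j, 0 ≤ A i j) {w : n → R} (hw : w ≤ w ᵥ* A)
    (m : ℕ) : w ≤ w ᵥ* A ^ m := by
  induction m with
  | zero => simp
  | succ m ih =>
    rw [pow_succ, ← vecMul_vecMul]
    exact hw.trans (vecMul_le_vecMul_of_nonneg hA ih)

theorem monotone_dotProduct_pow_mulVec (hA : ∀ i j, 0 ≤ A i j) {w v : n → R}
    (hw : w ≤ w ᵥ* A) (hv : 0 ≤ v) : Monotone fun m => w ⬝ᵥ (A ^ m *ᵥ v) := by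
  intro k m hkm
  obtain ⟨d, rfl⟩ := Nat.exists_eq_add_of_le hkm
  dsimp only
  rw [add_comm, pow_add, ← mulVec_mulVec, dotProduct_mulVec w (A ^ d)]
  exact dotProduct_le_dotProduct_of_nonneg_right (le_vecMul_pow_of_le_vecMul hA hw d)
    (mulVec_nonneg (pow_apply_nonneg hA k) hv)

theorem monotone_sum_pow_mulVec (hA : ∀ i j, 0 ≤ A i j) {v : n → R} (hv : 0 ≤ v) :
    Monotone fun m => (∑ j ∈ Finset.range m, A ^ j) *ᵥ v := by
  intro a b hab
  simp only [sum_mulVec]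
  exact Finset.sum_le_sum_of_subset_of_nonneg (Finset.range_mono hab)
    fun j _ _ => mulVec_nonneg (pow_apply_nonneg hA j) hv

end Nonneg

theorem dotProduct_mulVec_pos {m n R : Type*} [Fintype m] [Fintype n] [Semiring R]
    [PartialOrder R] [IsStrictOrderedRing R] {w : m → R} {A : Matrix m n R} {v : n → R}
    (hw : 0 ≤ w) (hA : ∀ i j, 0 ≤ A i j) (hv : 0 ≤ v) {i : m} {j : n} (hwi : 0 < w i)
    (hAij : 0 < A i j) (hvj : 0 < v j) : 0 < w ⬝ᵥ (A *ᵥ v) := by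
  have hAv : 0 < (A *ᵥ v) i :=
    (mul_pos hAij hvj).trans_le <| Finset.single_le_sum (f := fun j => A i j * v j)
      (fun j _ => mul_nonneg (hA i j) (hv j)) (Finset.mem_univ j)
  exact (mul_pos hwi hAv).trans_le <| Finset.single_le_sum (f := fun i => w i * (A *ᵥ v) i)
    (fun i _ => mul_nonneg (hw i) (mulVec_nonneg hA hv i)) (Finset.mem_univ i)

theorem norm_le_vecMul_norm_of_vecMul_map_ofReal_eq_self {n : Type*} [Fintype n]
    {M : Matrix n n ℝ} (hM : ∀ i j, 0 ≤ M i j) {u : n → ℂ}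
    (hu : u ᵥ* M.map Complex.ofReal = u) : (fun i => ‖u i‖) ≤ (fun i => ‖u i‖) ᵥ* M := by
  intro j
  calc ‖u j‖ = ‖∑ i, u i * M i j‖ := congrArg norm (congrFun hu j).symm
    _ ≤ ∑ i, ‖u i * M i j‖ := norm_sum_le _ _
    _ = ∑ i, ‖u i‖ * M i j := by
        simp only [norm_mul, Complex.norm_real, Real.norm_of_nonneg (hM _ j)]

end Matrix

theorem tendsto_sum_range_atTop_of_monotone {f : ℕ → ℝ} (hf : ∀ n, 0 ≤ f n)
    (hmono : Monotone f) {k : ℕ} (hk : 0 < f k) :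
    Tendsto (fun n => ∑ i ∈ Finset.range n, f i) atTop atTop := by
  refine (not_summable_iff_tendsto_nat_atTop_of_nonneg hf).mp fun hsum => hk.not_ge ?_
  exact ge_of_tendsto hsum.tendsto_atTop_zero (eventually_atTop.mpr ⟨k, fun m hm => hmono hm⟩)

theorem exists_tendsto_apply_atTop_of_tendsto_dotProduct {ι : Type*} [Fintype ι]
    {w : ι → ℝ} {f : ℕ → ι → ℝ} (hw : 0 ≤ w) (hf : Monotone f)
    (h : Tendsto (fun n => w ⬝ᵥ f n) atTop atTop) :
    ∃ i, Tendsto (fun n => f n i) atTop atTop := by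
  by_contra! hnot
  have hbdd : ∀ i, ∃ B, ∀ n, f n i < B := fun i => by
    simpa [tendsto_atTop_atTop_iff_of_monotone fun a b hab => hf hab i] using hnot i
  choose B hB using hbdd
  obtain ⟨n, hn⟩ := (h.eventually_gt_atTop (w ⬝ᵥ B)).exists
  exact hn.not_ge (dotProduct_le_dotProduct_of_nonneg_left (fun i => (hB i n).le) hw)

theorem partial_sums_unbounded_of_eigenvalue_one_general {K : ℕ}
    (M : Matrix (Fin K) (Fin K) ℝ) (hM : ∀ i j, 0 ≤ M i j)
    (hirr : ∀ i j, ∃ k : ℕ, 1 ≤ k ∧ 0 < (M ^ k) i j)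
    (hone : ∃ v : Fin K → ℂ, v ≠ 0 ∧ (M.map Complex.ofReal).mulVec v = (1 : ℂ) • v)
    (Y : Fin K → ℝ) (hY : ∀ i, 0 ≤ Y i) (hY0 : Y ≠ 0) :
    ∃ i, Tendsto (fun k : ℕ => ((∑ j ∈ Finset.range k, M ^ j).mulVec Y) i)
      atTop atTop := by
  obtain ⟨u, hu0, hu⟩ := exists_vecMul_eq_smul_of_mulVec_eq_smul hone
  rw [one_smul] at hu
  set w : Fin K → ℝ := fun i => ‖u i‖
  have hw0 : 0 ≤ w := fun i => norm_nonneg _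
  have hw : w ≤ w ᵥ* M := norm_le_vecMul_norm_of_vecMul_map_ofReal_eq_self hM hu
  obtain ⟨i, hi⟩ := Function.ne_iff.mp hu0
  obtain ⟨j, hj⟩ := Function.ne_iff.mp hY0
  obtain ⟨k, -, hk⟩ := hirr i j
  have hpos : 0 < w ⬝ᵥ (M ^ k *ᵥ Y) :=
    dotProduct_mulVec_pos hw0 (pow_apply_nonneg hM k) hY (norm_pos_iff.mpr hi) hk
      ((hY j).lt_of_ne' hj)
  have hgrowth : Tendsto (fun n => w ⬝ᵥ ((∑ j ∈ Finset.range n, M ^ j) *ᵥ Y)) atTop atTop := by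
    simp only [sum_mulVec, dotProduct_sum]
    exact tendsto_sum_range_atTop_of_monotone
      (fun m => dotProduct_nonneg_of_nonneg hw0 (mulVec_nonneg (pow_apply_nonneg hM m) hY))
      (monotone_dotProduct_pow_mulVec hM hw hY) hpos
  exact exists_tendsto_apply_atTop_of_tendsto_dotProduct hw0 (monotone_sum_pow_mulVec hM hY)
    hgrowth

theorem partial_sums_unbounded_of_eigenvalue_one {K : ℕ}
    (M : Matrix (Fin K) (Fin K) ℝ) (hM : ∀ i j, 0 ≤ M i j)
    (hirr : ∀ i j, ∃ k : ℕ, 1 ≤ k ∧ 0 < (M ^ k) i j)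
    (hspec : ∀ lam : ℂ,
      (∃ v : Fin K → ℂ, v ≠ 0 ∧ (M.map Complex.ofReal).mulVec v = lam • v) →
      ‖lam‖ ≤ 1)
    (hone : ∃ v : Fin K → ℂ, v ≠ 0 ∧ (M.map Complex.ofReal).mulVec v = (1 : ℂ) • v)
    (Y : Fin K → ℝ) (hY : ∀ i, 0 ≤ Y i) (hY0 : Y ≠ 0) :
    ∃ i, Tendsto (fun k : ℕ => ((∑ j ∈ Finset.range k, M ^ j).mulVec Y) i)
      atTop atTop :=
  partial_sums_unbounded_of_eigenvalue_one_general M hM hirr hone Y hY hY0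
end

section
/- Let g be a context-free grammar. Define the direct left-corner relation on nonterminals by: X ▷ Y if and only if g has a production rule whose left-hand side is X and whose right-hand side begins with the nonterminal Y. If the left-corner relation is cyclic at X, i.e., (X, X) is in the transitive closure of ▷, then there exists a list of symbols δ and an intermediate sentential form u such that g produces u from [nonterminal X] in one derivation step and g derives (nonterminal X) :: δ from u; in particular [nonterminal X] derives (nonterminal X) :: δ in at least one step. -/
namespace ContextFreeGrammar

variable {T : Type*} (g : ContextFreeGrammar T)

def LeftCorner (X Y : g.NT) : Prop :=
  ∃ r ∈ g.rules, r.input = X ∧ ∃ β, r.output = Symbol.nonterminal Y :: β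

variable {g}

theorem LeftCorner.exists_produces_cons {X Y : g.NT} (h : g.LeftCorner X Y)
    (δ : List (Symbol T g.NT)) :
    ∃ β, g.Produces (Symbol.nonterminal X :: δ) (Symbol.nonterminal Y :: (β ++ δ)) := by
  obtain ⟨r, hr, rfl, β, hout⟩ := h
  refine ⟨β, r, hr, ?_⟩
  simpa [hout] using ContextFreeRule.Rewrites.head (r := r) δ

theorem exists_derives_cons_of_reflTransGen_leftCorner {X Y : g.NT}
    (h : Relation.ReflTransGen g.LeftCorner X Y) :
    ∃ δ, g.Derives [Symbol.nonterminal X] (Symbol.nonterminal Y :: δ) := by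
  induction h with
  | refl => exact ⟨[], Derives.refl _⟩
  | tail _ hYZ ih =>
    obtain ⟨δ, hd⟩ := ih
    obtain ⟨β, hp⟩ := hYZ.exists_produces_cons δ
    exact ⟨β ++ δ, hd.trans_produces hp⟩

end ContextFreeGrammar

theorem cyclic_left_corner_derives {T : Type*} (g : ContextFreeGrammar T)
    (lc : g.NT → g.NT → Prop)
    (hlc : ∀ X Y : g.NT, lc X Y ↔
      ∃ r ∈ g.rules, r.input = X ∧ ∃ β, r.output = Symbol.nonterminal Y :: β)
    (X : g.NT) (h : Relation.TransGen lc X X) :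
    ∃ (δ : List (Symbol T g.NT)) (u : List (Symbol T g.NT)),
      g.Produces [Symbol.nonterminal X] u ∧
      g.Derives u (Symbol.nonterminal X :: δ) := by
  obtain rfl : lc = g.LeftCorner := funext₂ fun X Y => propext (hlc X Y)
  obtain ⟨Y, hXY, hYX⟩ := Relation.TransGen.head'_iff.mp h
  obtain ⟨β, hp⟩ := hXY.exists_produces_cons []
  obtain ⟨δ, hd⟩ := ContextFreeGrammar.exists_derives_cons_of_reflTransGen_leftCorner hYX
  refine ⟨δ ++ β, _, hp, ?_⟩
  simpa using hd.append_right β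
end
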